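/- There exist a finite set Λ ⊂ ℤ² \ {0} and, for each k ∈ Λ, a smooth function Γ_k defined on the closed ball B_{1/2}(Id) = { R ∈ Sym(2,ℝ) : ‖R − Id‖ ≤ 1/2 } (operator norm; all such R are positive definite) such that for every R ∈ B_{1/2}(Id), R = Σ_{k ∈ Λ} Γ_k(R)² · (k/|k|) ⊗ (k/|k|). -/

import Mathlib

open MeasureTheory

noncomputable section

/-! We model the torus `𝕋² = ℝ²/ℤ²` via `ℤ²`-periodic functions on `ℝ²`
(with the Euclidean norm, i.e. `EuclideanSpace ℝ (Fin 2)`), integrating over the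
fundamental domain `[0,1]²`, which has Lebesgue measure `1`. -/

/-- The plane `ℝ²` with the Euclidean norm. -/
abbrev R2 : Type := EuclideanSpace ℝ (Fin 2)

/-- Build a point of `ℝ²` from two coordinates. -/
def mk2 (a b : ℝ) : R2 := (EuclideanSpace.equiv (Fin 2) ℝ).symm ![a, b]

/-- First coordinate direction. -/
def ee1 : R2 := mk2 1 0

/-- Second coordinate direction. -/
def ee2 : R2 := mk2 0 1

/-- The fundamental domain `[0,1]²` of the torus. -/
def Q2 : Set R2 := {x | ∀ i, x i ∈ Set.Icc (0:ℝ) 1}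

/-- Lebesgue (Haar) measure on the torus: Lebesgue measure restricted to the
fundamental domain. -/
def μT2 : Measure R2 := volume.restrict Q2

/-- `ℤ²`-periodicity: the function descends to the torus `ℝ²/ℤ²`. -/
def Periodic2 {E : Type*} (f : R2 → E) : Prop :=
  ∀ (x : R2) (k : Fin 2 → ℤ),
    f (x + (EuclideanSpace.equiv (Fin 2) ℝ).symm (fun i => (k i : ℝ))) = f x

/-- Euclidean dot product on `ℝ²`. -/
def dot2 (a b : R2) : ℝ := a 0 * b 0 + a 1 * b 1

/-- Squared Euclidean norm on `ℝ²`. -/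
def sq2 (a : R2) : ℝ := a 0 ^ 2 + a 1 ^ 2

/-- Partial derivative of `f` in the direction `v`. -/
def pd (f : R2 → ℝ) (v : R2) (x : R2) : ℝ := fderiv ℝ f x v

/-- Laplacian on `ℝ²`. -/
def lap (f : R2 → ℝ) (x : R2) : ℝ := pd (pd f ee1) ee1 x + pd (pd f ee2) ee2 x

/-- (Classical) divergence of a vector field on `ℝ²`. -/
def div2 (f : R2 → R2) (x : R2) : ℝ :=
  pd (fun y => f y 0) ee1 x + pd (fun y => f y 1) ee2 x

/-- `f` is weakly divergence-free: `∫ f·∇ψ = 0` for every smooth (periodic) `ψ`. -/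
def WeaklyDivFree (f : R2 → R2) : Prop :=
  ∀ ψ : R2 → ℝ, ContDiff ℝ (⊤ : ℕ∞) ψ → Periodic2 ψ →
    ∫ x, (f x 0 * pd ψ ee1 x + f x 1 * pd ψ ee2 x) ∂μT2 = 0

/-- Smooth divergence-free test functions on `𝕋² × ℝ` vanishing for `t ≥ T`. -/
structure IsTestFun (T : ℝ) (φ : ℝ → R2 → R2) : Prop where
  smooth : ContDiff ℝ (⊤ : ℕ∞) (fun q : ℝ × R2 => φ q.1 q.2)
  periodic : ∀ t, Periodic2 (φ t)
  divfree : ∀ t x, div2 (φ t) x = 0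
  vanish : ∀ t x, T ≤ t → φ t x = 0

/-- The integrand `ν u·Δφ + (u ⊗ u) : ∇φ + u·∂ₜφ` of the weak formulation of the
Navier–Stokes equations with viscosity `ν` (Euler for `ν = 0`). -/
def nsIntegrand (ν : ℝ) (u φ : ℝ → R2 → R2) (t : ℝ) (x : R2) : ℝ :=
  ν * (u t x 0 * lap (fun y => φ t y 0) x + u t x 1 * lap (fun y => φ t y 1) x)
  + (u t x 0 * u t x 0 * pd (fun y => φ t y 0) ee1 x
     + u t x 0 * u t x 1 * pd (fun y => φ t y 0) ee2 x
     + u t x 1 * u t x 0 * pd (fun y => φ t y 1) ee1 x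
     + u t x 1 * u t x 1 * pd (fun y => φ t y 1) ee2 x)
  + (u t x 0 * deriv (fun s => φ s x 0) t + u t x 1 * deriv (fun s => φ s x 1) t)

/-- Weak solution of the 2D Navier–Stokes equations with viscosity `ν` (`ν = 0`:
Euler equations) on `𝕋² × [0,T]` with initial data `u₀`. -/
def IsWeakSolution (ν T : ℝ) (u₀ : R2 → R2) (u : ℝ → R2 → R2) : Prop :=
  (∀ t, Periodic2 (u t)) ∧
  MemLp (fun q : ℝ × R2 => u q.1 q.2) 2 ((volume.restrict (Set.Icc 0 T)).prod μT2) ∧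
  (∀ᵐ t ∂volume.restrict (Set.Icc (0:ℝ) T), WeaklyDivFree (u t)) ∧
  (∀ φ : ℝ → R2 → R2, IsTestFun T φ →
    (∫ x, dot2 (u₀ x) (φ 0 x) ∂μT2)
      + (∫ t in Set.Icc (0:ℝ) T, ∫ x, nsIntegrand ν u φ t x ∂μT2) = 0)

/-- Continuity of `t ↦ u(·,t)` as a map from `J` into `Lᵖ(𝕋²)`. -/
def ContInLp (p : ENNReal) (J : Set ℝ) (u : ℝ → R2 → R2) : Prop :=
  (∀ t ∈ J, MemLp (u t) p μT2) ∧
  ∀ t ∈ J, ∀ ε : ℝ, 0 < ε → ∃ δ : ℝ, 0 < δ ∧ ∀ s ∈ J, |s - t| < δ →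
    eLpNorm (fun x => u s x - u t x) p μT2 < ENNReal.ofReal ε

/-- The `2×2` identity matrix (as `Fin 2 → Fin 2 → ℝ`). -/
def idM2 : Fin 2 → Fin 2 → ℝ := fun i j => if i = j then 1 else 0

/-- Operator norm `sup_{|x|=1} |Ax|` of a `2×2` matrix, via its action on `ℝ²`
with the Euclidean norm. -/
def opNorm2 (A : Fin 2 → Fin 2 → ℝ) : ℝ :=
  ‖Matrix.toEuclideanCLM (𝕜 := ℝ) (Matrix.of A)‖

/-- The closed ball of radius `1/2` around the identity in the symmetric `2×2`
matrices (operator norm). -/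
def symmBall : Set (Fin 2 → Fin 2 → ℝ) :=
  {A | (∀ i j, A i j = A j i) ∧ opNorm2 (fun i j => A i j - idM2 i j) ≤ 1/2}

/-- The unit vector `k/|k|` of a nonzero integer vector `k ∈ ℤ²`. -/
def ekVec (k : ℤ × ℤ) : Fin 2 → ℝ :=
  fun i => (if i = 0 then (k.1 : ℝ) else (k.2 : ℝ)) /
    Real.sqrt ((k.1 : ℝ)^2 + (k.2 : ℝ)^2)



lemma symmBall_bounds {A : Fin 2 → Fin 2 → ℝ} (hA : A ∈ symmBall) :
    (A 0 0 - 1)^2 + (A 0 1)^2 ≤ 1/4 ∧ (A 0 1)^2 + (A 1 1 - 1)^2 ≤ 1/4 := by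
  obtain ⟨hsym, hnorm⟩ := hA
  set M : Fin 2 → Fin 2 → ℝ := fun i j => A i j - idM2 i j with hM
  set T := Matrix.toEuclideanCLM (𝕜 := ℝ) (Matrix.of M) with hT
  have key : ∀ v : Fin 2 → ℝ,
      Real.sqrt (∑ i, ((Matrix.of M).mulVec v i)^2) ≤ 1/2 * Real.sqrt (∑ i, (v i)^2) := by
    intro v
    have h1 : ‖T ((WithLp.equiv 2 (Fin 2 → ℝ)).symm v)‖
        ≤ ‖T‖ * ‖(WithLp.equiv 2 (Fin 2 → ℝ)).symm v‖ := T.le_opNorm _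
    have h2 : ‖T‖ * ‖(WithLp.equiv 2 (Fin 2 → ℝ)).symm v‖
        ≤ 1/2 * ‖(WithLp.equiv 2 (Fin 2 → ℝ)).symm v‖ :=
      mul_le_mul_of_nonneg_right hnorm (norm_nonneg _)
    have h3 : T ((WithLp.equiv 2 (Fin 2 → ℝ)).symm v)
        = (WithLp.equiv 2 (Fin 2 → ℝ)).symm ((Matrix.of M).mulVec v) := by
      rw [hT]; rfl
    have h4 : ∀ w : Fin 2 → ℝ, ‖(WithLp.equiv 2 (Fin 2 → ℝ)).symm w‖
        = Real.sqrt (∑ i, (w i)^2) := by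
      intro w
      rw [EuclideanSpace.norm_eq]
      congr 1
      refine Finset.sum_congr rfl fun i _ => ?_
      rw [WithLp.equiv_symm_apply, PiLp.toLp_apply]
      rw [Real.norm_eq_abs, sq_abs]
    calc Real.sqrt (∑ i, ((Matrix.of M).mulVec v i)^2)
        = ‖T ((WithLp.equiv 2 (Fin 2 → ℝ)).symm v)‖ := by rw [h3, h4]
      _ ≤ 1/2 * ‖(WithLp.equiv 2 (Fin 2 → ℝ)).symm v‖ := h1.trans h2
      _ = 1/2 * Real.sqrt (∑ i, (v i)^2) := by rw [h4]
  constructor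
  · have := key ![1, 0]
    have hmv : ∀ i, (Matrix.of M).mulVec ![1, 0] i = M i 0 := by
      intro i
      simp [Matrix.mulVec, dotProduct, Fin.sum_univ_two]
    rw [Fin.sum_univ_two, Fin.sum_univ_two] at this
    rw [hmv 0, hmv 1] at this
    have hM00 : M 0 0 = A 0 0 - 1 := by simp [hM, idM2]
    have hM10 : M 1 0 = A 0 1 := by simp [hM, idM2, hsym 0 1]
    rw [hM00, hM10] at this
    norm_num at this
    have hs0 : (0:ℝ) ≤ (A 0 0 - 1)^2 + (A 0 1)^2 := by positivity
    nlinarith [Real.sq_sqrt hs0, Real.sqrt_nonneg ((A 0 0 - 1)^2 + (A 0 1)^2)]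
  · have := key ![0, 1]
    have hmv : ∀ i, (Matrix.of M).mulVec ![0, 1] i = M i 1 := by
      intro i
      simp [Matrix.mulVec, dotProduct, Fin.sum_univ_two]
    rw [Fin.sum_univ_two, Fin.sum_univ_two] at this
    rw [hmv 0, hmv 1] at this
    have hM01 : M 0 1 = A 0 1 := by simp [hM, idM2]
    have hM11 : M 1 1 = A 1 1 - 1 := by simp [hM, idM2]
    rw [hM01, hM11] at this
    norm_num at this
    have hs0 : (0:ℝ) ≤ (A 0 1)^2 + (A 1 1 - 1)^2 := by positivity
    nlinarith [Real.sq_sqrt hs0, Real.sqrt_nonneg ((A 0 1)^2 + (A 1 1 - 1)^2)]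

lemma keyx (a x : ℝ) (h1 : (a-1)^2 + x^2 ≤ 1/4) : 0 < a + x^2 - 2*x := by
  nlinarith [sq_nonneg (a - 7/12), sq_nonneg (x - 5/11), h1]

lemma halfbounds (a d b : ℝ) (h1 : (a-1)^2 + b^2 ≤ 1/4) (h2 : b^2 + (d-1)^2 ≤ 1/4) :
    1/2 ≤ a ∧ a ≤ 3/2 ∧ 1/2 ≤ d ∧ d ≤ 3/2 := by
  refine ⟨?_, ?_, ?_, ?_⟩ <;>
    nlinarith [sq_nonneg (a-3/2), sq_nonneg (d-3/2), sq_nonneg (a-1/2), sq_nonneg (d-1/2),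
      sq_nonneg b]

lemma pos1 (a d b : ℝ) (h1 : (a-1)^2 + b^2 ≤ 1/4) (h2 : b^2 + (d-1)^2 ≤ 1/4) :
    b^2*(a+d) < 2*a^2 := by
  have hb1 : b^2 ≤ 1/4 - (a-1)^2 := by linarith
  have h0 : (0:ℝ) ≤ 1/4 - (a-1)^2 := le_trans (sq_nonneg b) hb1
  obtain ⟨ha, ha', hd, hd'⟩ := halfbounds a d b h1 h2
  have had3 : a + d ≤ 3 := by linarith
  have had0 : 0 ≤ a + d := by linarith
  have step : b^2*(a+d) ≤ (1/4 - (a-1)^2)*3 :=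
    le_trans (mul_le_mul_of_nonneg_right hb1 had0) (mul_le_mul_of_nonneg_left had3 h0)
  nlinarith [sq_nonneg (a - 3/5)]

lemma pos3 (a d b : ℝ) (h1 : (a-1)^2 + b^2 ≤ 1/4) (h2 : b^2 + (d-1)^2 ≤ 1/4) :
    0 < 2*a*d + (b^2+2*b)*(a+d) := by
  obtain ⟨ha, ha', hd, hd'⟩ := halfbounds a d b h1 h2
  rcases le_total 0 b with hb | hb
  · have h5 : (0:ℝ) ≤ b^2+2*b := by nlinarith [sq_nonneg b]
    nlinarith [mul_nonneg h5 (show (0:ℝ) ≤ a+d by linarith)]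
  · rcases le_total a d with had | had
    · have k := keyx a (-b) (by nlinarith)
      have hk : 0 < (a + b^2 + 2*b) * (a+d) := by
        apply mul_pos (by nlinarith) (by linarith)
      nlinarith [hk, mul_nonneg (show (0:ℝ) ≤ a by linarith) (show (0:ℝ) ≤ d - a by linarith)]
    · have k := keyx d (-b) (by nlinarith)
      have hk : 0 < (d + b^2 + 2*b) * (a+d) := by
        apply mul_pos (by nlinarith) (by linarith)
      nlinarith [hk, mul_nonneg (show (0:ℝ) ≤ d by linarith) (show (0:ℝ) ≤ a - d by linarith)]

/-- the smooth shift function -/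
def sF (A : Fin 2 → Fin 2 → ℝ) : ℝ := A 0 0 * A 1 1 / (A 0 0 + A 1 1) + (A 0 1)^2/2

lemma sF_facts {A : Fin 2 → Fin 2 → ℝ} (hA : A ∈ symmBall) :
    0 < A 0 0 - sF A ∧ 0 < A 1 1 - sF A ∧ 0 < sF A + A 0 1 ∧ 0 < sF A - A 0 1 := by
  obtain ⟨h1, h2⟩ := symmBall_bounds hA
  set a := A 0 0; set d := A 1 1; set b := A 0 1
  obtain ⟨ha, ha', hd, hd'⟩ := halfbounds a d b h1 h2
  have had : (0:ℝ) < a + d := by linarith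
  have had' : (a + d) ≠ 0 := ne_of_gt had
  have e1 : a - sF A = (2*a^2 - b^2*(a+d))/(2*(a+d)) := by
    rw [show sF A = a * d / (a + d) + b^2/2 from rfl]; field_simp; ring
  have e2 : d - sF A = (2*d^2 - b^2*(a+d))/(2*(a+d)) := by
    rw [show sF A = a * d / (a + d) + b^2/2 from rfl]; field_simp; ring
  have e3 : sF A + b = (2*a*d + (b^2+2*b)*(a+d))/(2*(a+d)) := by
    rw [show sF A = a * d / (a + d) + b^2/2 from rfl]; field_simp; ring
  have e4 : sF A - b = (2*a*d + (b^2-2*b)*(a+d))/(2*(a+d)) := by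
    rw [show sF A = a * d / (a + d) + b^2/2 from rfl]; field_simp; ring
  have hp1 := pos1 a d b h1 h2
  have hp2 := pos1 d a b (by linarith) (by linarith)
  have hp3 := pos3 a d b h1 h2
  have hp4 := pos3 a d (-b) (by nlinarith) (by nlinarith)
  refine ⟨?_, ?_, ?_, ?_⟩
  · rw [e1]; apply div_pos (by linarith) (by linarith)
  · rw [e2]; apply div_pos (by nlinarith) (by linarith)
  · rw [e3]; apply div_pos (by linarith) (by linarith)
  · rw [e4]; apply div_pos (by nlinarith) (by linarith)

def ΓF : ℤ × ℤ → (Fin 2 → Fin 2 → ℝ) → ℝ := fun k A =>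
  if k = (1, 0) then Real.sqrt (A 0 0 - sF A)
  else if k = (0, 1) then Real.sqrt (A 1 1 - sF A)
  else if k = (1, 1) then Real.sqrt (sF A + A 0 1)
  else Real.sqrt (sF A - A 0 1)

/-- Geometric decomposition lemma: there are finitely many
directions `k ∈ ℤ² \ {0}` and smooth coefficients `Γ_k` on `B_{1/2}(Id)` such that
`R = ∑_k Γ_k(R)² (k/|k|) ⊗ (k/|k|)` for every symmetric `R` with `‖R − Id‖ ≤ 1/2`. -/
theorem geometric_lemma :
    ∃ Λ : Finset (ℤ × ℤ), ((0, 0) : ℤ × ℤ) ∉ Λ ∧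
      ∃ Γ : ℤ × ℤ → (Fin 2 → Fin 2 → ℝ) → ℝ,
        (∀ k ∈ Λ, ContDiffOn ℝ (⊤ : ℕ∞) (Γ k) symmBall) ∧
        ∀ A ∈ symmBall, ∀ i j : Fin 2,
          A i j = ∑ k ∈ Λ, (Γ k A)^2 * (ekVec k i * ekVec k j) := by
  refine ⟨{(1,0), (0,1), (1,1), (1,-1)}, by decide, ΓF, ?_, ?_⟩
  · -- smoothness
    intro k hk A hA
    obtain ⟨hf1, hf2, hf3, hf4⟩ := sF_facts hA
    obtain ⟨h1, h2⟩ := symmBall_bounds hA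
    obtain ⟨ha, ha', hd, hd'⟩ := halfbounds _ _ _ h1 h2
    have had : A 0 0 + A 1 1 ≠ 0 := by intro h; linarith [h]
    have hproj : ∀ i j : Fin 2, ContDiffAt ℝ (⊤ : ℕ∞) (fun B : Fin 2 → Fin 2 → ℝ => B i j) A := by
      intro i j
      exact ((contDiff_apply ℝ ℝ j).comp (contDiff_apply ℝ (Fin 2 → ℝ) i)).contDiffAt
    have hsF : ContDiffAt ℝ (⊤ : ℕ∞) sF A := by
      apply ContDiffAt.add
      · exact ContDiffAt.div ((hproj 0 0).mul (hproj 1 1)) ((hproj 0 0).add (hproj 1 1)) had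
      · exact ((hproj 0 1).pow 2).div_const 2
    apply ContDiffAt.contDiffWithinAt
    fin_cases hk
    · unfold ΓF; simpa using ((hproj 0 0).sub hsF).sqrt (ne_of_gt hf1)
    · unfold ΓF; simpa using ((hproj 1 1).sub hsF).sqrt (ne_of_gt hf2)
    · unfold ΓF; simpa using (hsF.add (hproj 0 1)).sqrt (ne_of_gt hf3)
    · unfold ΓF; simpa using (hsF.sub (hproj 0 1)).sqrt (ne_of_gt hf4)
  · -- the identity
    intro A hA i j
    obtain ⟨hf1, hf2, hf3, hf4⟩ := sF_facts hA
    have hsym := hA.1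
    have hsum : ∀ f : ℤ × ℤ → ℝ,
        ∑ k ∈ ({(1,0), (0,1), (1,1), (1,-1)} : Finset (ℤ × ℤ)), f k
          = f (1,0) + f (0,1) + f (1,1) + f (1,-1) := by
      intro f
      rw [Finset.sum_insert (by decide), Finset.sum_insert (by decide),
        Finset.sum_insert (by decide), Finset.sum_singleton]
      ring
    rw [hsum]
    have g1 : (ΓF (1,0) A)^2 = A 0 0 - sF A := by
      rw [ΓF]; norm_num; exact Real.sq_sqrt hf1.le
    have g2 : (ΓF (0,1) A)^2 = A 1 1 - sF A := by
      rw [ΓF]; norm_num; exact Real.sq_sqrt hf2.le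
    have g3 : (ΓF (1,1) A)^2 = sF A + A 0 1 := by
      rw [ΓF]; norm_num; exact Real.sq_sqrt hf3.le
    have g4 : (ΓF (1,-1) A)^2 = sF A - A 0 1 := by
      rw [ΓF]; norm_num; exact Real.sq_sqrt hf4.le
    rw [g1, g2, g3, g4]
    have s2 : Real.sqrt 2 * Real.sqrt 2 = 2 := Real.mul_self_sqrt (by norm_num)
    have s2pos : (0:ℝ) < Real.sqrt 2 := Real.sqrt_pos.mpr (by norm_num)
    have e10 : ∀ i : Fin 2, ekVec (1,0) i = if i = 0 then 1 else 0 := by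
      intro i; fin_cases i <;> simp [ekVec] <;> norm_num
    have e01 : ∀ i : Fin 2, ekVec (0,1) i = if i = 0 then 0 else 1 := by
      intro i; fin_cases i <;> simp [ekVec] <;> norm_num
    have e11 : ∀ i : Fin 2, ekVec (1,1) i = 1 / Real.sqrt 2 := by
      intro i; fin_cases i <;> simp [ekVec] <;> norm_num
    have e1m1 : ∀ i : Fin 2, ekVec (1,-1) i = (if i = 0 then 1 else -1) / Real.sqrt 2 := by
      intro i; fin_cases i <;> simp [ekVec] <;> norm_num
    rw [e10, e10, e01, e01, e11, e11, e1m1, e1m1]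
    fin_cases i <;> fin_cases j <;> simp <;> field_simp <;> nlinarith [s2, hsym 0 1]
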